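/- The NFA M_r whose states are RS(r), initial state r, transitions given by the SOS relation —a→, and accepting states those r' ∈ RS(r) with r'√, accepts exactly the language L(r): L(M_r) = L(r). -/

import Mathlib

open RegularExpression

/-- The acceptance predicate √ on regular expressions. -/
inductive Surd {α : Type} : RegularExpression α → Prop
  | eps : Surd 1
  | star (r : RegularExpression α) : Surd (RegularExpression.star r)
  | plusL {r₁ r₂ : RegularExpression α} : Surd r₁ → Surd (r₁ + r₂)
  | plusR {r₁ r₂ : RegularExpression α} : Surd r₂ → Surd (r₁ + r₂)
  | comp {r₁ r₂ : RegularExpression α} : Surd r₁ → Surd r₂ → Surd (r₁ * r₂)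

/-- The SOS transition relation r —a→ r'. -/
inductive Deriv {α : Type} : RegularExpression α → α → RegularExpression α → Prop
  | char (a : α) : Deriv (RegularExpression.char a) a 1
  | plusL {r₁ r₂ r₁' : RegularExpression α} {a : α} :
      Deriv r₁ a r₁' → Deriv (r₁ + r₂) a r₁'
  | plusR {r₁ r₂ r₂' : RegularExpression α} {a : α} :
      Deriv r₂ a r₂' → Deriv (r₁ + r₂) a r₂'
  | compL {r₁ r₂ r₁' : RegularExpression α} {a : α} :
      Deriv r₁ a r₁' → Deriv (r₁ * r₂) a (r₁' * r₂)
  | compR {r₁ r₂ r₂' : RegularExpression α} {a : α} :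
      Surd r₁ → Deriv r₂ a r₂' → Deriv (r₁ * r₂) a r₂'
  | star {r r'' : RegularExpression α} {a : α} :
      Deriv r a r'' → Deriv (RegularExpression.star r) a (r'' * RegularExpression.star r)

/-- Multi-step transitions labelled by a word. -/
inductive Derivs {α : Type} : RegularExpression α → List α → RegularExpression α → Prop
  | nil (r : RegularExpression α) : Derivs r [] r
  | cons {r r' r'' : RegularExpression α} {a : α} {w : List α} :
      Deriv r a r' → Derivs r' w r'' → Derivs r (a :: w) r''

/-- The reachability set RS(r). -/
def RS {α : Type} (r : RegularExpression α) : Set (RegularExpression α) :=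
  {r' | Relation.ReflTransGen (fun s t => ∃ a, Deriv s a t) r r'}

/-- Syntactic size of a regular expression. -/
def rsize {α : Type} : RegularExpression α → ℕ
  | RegularExpression.zero => 1
  | RegularExpression.epsilon => 1
  | RegularExpression.char _ => 1
  | RegularExpression.plus r₁ r₂ => rsize r₁ + rsize r₂ + 1
  | RegularExpression.comp r₁ r₂ => rsize r₁ + rsize r₂ + 1
  | RegularExpression.star r => rsize r + 1

/-- The NFA M_r built from the SOS semantics, with states the reachability set RS(r). -/
def Mr {α : Type} (r : RegularExpression α) : NFA α {s : RegularExpression α // s ∈ RS r} where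
  step := fun q a => {q' | Deriv q.1 a q'.1}
  start := {⟨r, Relation.ReflTransGen.refl⟩}
  accept := {q | Surd q.1}

/-! A nonempty word `a :: w` lies in `L(r)` iff `r —a→ r'` for some `r'` with `w ∈ L(r')`, and
`[] ∈ L(r)` iff `r√`. By induction on the word, the language accepted by `M_r` from a set `S` of
states is therefore the union of the `L(q)`, `q ∈ S`, the derivatives staying inside `RS(r)`. -/

open scoped Computability

namespace Language

variable {α : Type*} {l m : Language α} {a : α} {w : List α}

theorem nil_mem_mul_iff : [] ∈ l * m ↔ [] ∈ l ∧ [] ∈ m := by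
  simp [mem_mul, List.append_eq_nil_iff]

theorem cons_mem_mul_iff :
    a :: w ∈ l * m ↔ (∃ u, a :: u ∈ l ∧ ∃ v ∈ m, u ++ v = w) ∨ ([] ∈ l ∧ a :: w ∈ m) := by
  constructor
  · rw [mem_mul]
    rintro ⟨_ | ⟨b, u⟩, hu, v, hv, huv⟩
    · exact .inr ⟨hu, huv ▸ hv⟩
    · obtain ⟨rfl, rfl⟩ := List.cons.inj huv
      exact .inl ⟨u, hu, v, hv, rfl⟩
  · rintro (⟨u, hu, v, hv, rfl⟩ | ⟨hl, hm⟩)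
    · exact append_mem_mul hu hv
    · exact append_mem_mul hl hm

theorem cons_mem_kstar_iff : a :: w ∈ l∗ ↔ ∃ u, a :: u ∈ l ∧ ∃ v ∈ l∗, u ++ v = w := by
  constructor
  · rw [mem_kstar_iff_exists_nonempty]
    rintro ⟨_ | ⟨_ | ⟨b, u⟩, S⟩, hw, hS⟩
    · simp at hw
    · exact absurd rfl (hS [] List.mem_cons_self).2
    · simp only [List.flatten_cons, List.cons_append, List.cons.injEq] at hw
      obtain ⟨rfl, rfl⟩ := hw
      exact ⟨u, (hS _ List.mem_cons_self).1, S.flatten,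
        join_mem_kstar fun y hy => (hS y (List.mem_cons_of_mem _ hy)).1, rfl⟩
  · rintro ⟨u, hu, v, hv, rfl⟩
    exact (mul_kstar_le_kstar : l * l∗ ≤ l∗) (append_mem_mul hu hv)

end Language

section

variable {α : Type}

theorem surd_iff_nil_mem_matches' {r : RegularExpression α} : Surd r ↔ [] ∈ r.matches' := by
  constructor
  · intro h
    induction h with
    | eps => exact Language.nil_mem_one
    | star r => exact Language.nil_mem_kstar _
    | plusL _ ih => exact .inl ih
    | plusR _ ih => exact .inr ih
    | comp _ _ ih₁ ih₂ => exact Language.nil_mem_mul_iff.mpr ⟨ih₁, ih₂⟩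
  · intro h
    induction r with
    | zero => exact h.elim
    | epsilon => exact .eps
    | char a => exact absurd h (List.cons_ne_nil a []).symm
    | plus r₁ r₂ ih₁ ih₂ => exact h.elim (fun h => .plusL (ih₁ h)) (fun h => .plusR (ih₂ h))
    | comp r₁ r₂ ih₁ ih₂ =>
      obtain ⟨h₁, h₂⟩ := Language.nil_mem_mul_iff.mp h
      exact .comp (ih₁ h₁) (ih₂ h₂)
    | star r => exact .star r

theorem Deriv.cons_mem_matches' {r r' : RegularExpression α} {a : α} (h : Deriv r a r')
    {w : List α} (hw : w ∈ r'.matches') : a :: w ∈ r.matches' := by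
  induction h generalizing w with
  | char b => rw [(Language.mem_one w).mp hw]; rfl
  | plusL _ ih => exact .inl (ih hw)
  | plusR _ ih => exact .inr (ih hw)
  | compL _ ih =>
    obtain ⟨u, hu, v, hv, rfl⟩ := Language.mem_mul.mp hw
    exact Language.append_mem_mul (ih hu) hv
  | compR hs _ ih => exact Language.append_mem_mul (surd_iff_nil_mem_matches'.mp hs) (ih hw)
  | star _ ih =>
    obtain ⟨u, hu, v, hv, rfl⟩ := Language.mem_mul.mp hw
    exact Language.cons_mem_kstar_iff.mpr ⟨u, ih hu, v, hv, rfl⟩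

theorem exists_deriv_of_cons_mem_matches' {r : RegularExpression α} {a : α} {w : List α}
    (h : a :: w ∈ r.matches') : ∃ r', Deriv r a r' ∧ w ∈ r'.matches' := by
  induction r generalizing w with
  | zero => exact h.elim
  | epsilon => exact absurd h (List.cons_ne_nil a w)
  | char b =>
    obtain ⟨rfl, rfl⟩ := List.cons_eq_cons.mp (h : a :: w = [b])
    exact ⟨1, .char a, Language.nil_mem_one⟩
  | plus r₁ r₂ ih₁ ih₂ =>
    rcases h with h | h
    · obtain ⟨r', hd, hw⟩ := ih₁ h
      exact ⟨r', .plusL hd, hw⟩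
    · obtain ⟨r', hd, hw⟩ := ih₂ h
      exact ⟨r', .plusR hd, hw⟩
  | comp r₁ r₂ ih₁ ih₂ =>
    rcases Language.cons_mem_mul_iff.mp h with ⟨u, hu, v, hv, rfl⟩ | ⟨h₁, h₂⟩
    · obtain ⟨r₁', hd, hu'⟩ := ih₁ hu
      exact ⟨r₁' * r₂, .compL hd, Language.append_mem_mul hu' hv⟩
    · obtain ⟨r₂', hd, hw⟩ := ih₂ h₂
      exact ⟨r₂', .compR (surd_iff_nil_mem_matches'.mpr h₁) hd, hw⟩
  | star s ih =>
    obtain ⟨u, hu, v, hv, rfl⟩ := Language.cons_mem_kstar_iff.mp h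
    obtain ⟨s', hd, hu'⟩ := ih hu
    exact ⟨s' * s.star, .star hd, Language.append_mem_mul hu' hv⟩

theorem cons_mem_matches'_iff_exists_deriv {r : RegularExpression α} {a : α} {w : List α} :
    a :: w ∈ r.matches' ↔ ∃ r', Deriv r a r' ∧ w ∈ r'.matches' :=
  ⟨exists_deriv_of_cons_mem_matches', fun ⟨_, hd, hw⟩ => hd.cons_mem_matches' hw⟩

theorem mem_RS_of_deriv {r s t : RegularExpression α} {a : α} (hs : s ∈ RS r)
    (h : Deriv s a t) : t ∈ RS r :=
  .tail hs ⟨a, h⟩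

theorem mem_acceptsFrom_Mr_iff {r : RegularExpression α} {S : Set {s // s ∈ RS r}}
    {w : List α} : w ∈ (Mr r).acceptsFrom S ↔ ∃ q ∈ S, w ∈ q.1.matches' := by
  induction w generalizing S with
  | nil =>
    simp only [NFA.nil_mem_acceptsFrom]
    exact exists_congr fun q => and_congr_right fun _ => surd_iff_nil_mem_matches'
  | cons a w ih =>
    rw [NFA.cons_mem_acceptsFrom, ih]
    simp only [NFA.mem_stepSet, cons_mem_matches'_iff_exists_deriv]
    constructor
    · rintro ⟨q', ⟨q, hq, hd⟩, hw⟩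
      exact ⟨q, hq, q'.1, hd, hw⟩
    · rintro ⟨q, hq, s, hd, hw⟩
      exact ⟨⟨s, mem_RS_of_deriv q.2 hd⟩, ⟨q, hq, hd⟩, hw⟩

end

theorem Mr_accepts {α : Type} (r : RegularExpression α) :
    (Mr r).accepts = r.matches' := by
  ext w
  rw [NFA.accepts_eq_acceptsFrom_start, mem_acceptsFrom_Mr_iff]
  simp [Mr]
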